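/- arXiv:2303.17535 — 5 statements merged into one kernel-verified Lean document; each statement's English description precedes it below -/
import Mathlib

section
/- Let k ≥ 1 and m ≥ 1 be integers, let V be a finite linearly ordered set, and let X be an abstract simplicial complex on V having exactly m maximal k-faces (maximal faces with k+1 elements). Let X' be the simplicial complex obtained from X by deleting all m of these maximal k-faces. If β_k(X) < m, then β_{k−1}(X') ≥ 1. -/
variable {V : Type*} [Fintype V] [LinearOrder V]

/-- The space of `(d−1)`-dimensional cochains (functions on faces with `d` elements),
where the empty set is allowed as the unique face with `0` elements, so that
`Coch X 0 ≅ ℚ` plays the role of `C^{−1}(X) = ℚ` in reduced cohomology. -/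
abbrev Coch (X : Finset (Finset V)) (d : ℕ) : Type _ :=
  {σ : Finset V // σ.card = d ∧ (σ ∈ X ∨ σ = ∅)} → ℚ

/-- The simplicial coboundary map: for a face `σ = {v_0 < … < v_d}` with `d+1` elements,
`(δ f)(σ) = Σ_i (−1)^i f(σ ∖ {v_i})`. For `d = 0` this is the augmentation
`ℚ → C^0`, `a ↦ constant a`. -/
noncomputable def delta (X : Finset (Finset V)) (d : ℕ) :
    Coch X d →ₗ[ℚ] Coch X (d + 1) where
  toFun f σ := ∑ v ∈ σ.1,
    (-1 : ℚ) ^ ((σ.1.filter (fun w => w < v)).card) *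
      (if h : (σ.1.erase v).card = d ∧ ((σ.1.erase v) ∈ X ∨ σ.1.erase v = ∅) then
        f ⟨σ.1.erase v, h⟩ else 0)
  map_add' f g := by
    funext σ
    simp only [Pi.add_apply]
    rw [← Finset.sum_add_distrib]
    refine Finset.sum_congr rfl fun v _ => ?_
    by_cases h : (σ.1.erase v).card = d ∧ ((σ.1.erase v) ∈ X ∨ σ.1.erase v = ∅)
    · simp [h, mul_add]
    · simp [h]
  map_smul' a f := by
    funext σ
    simp only [RingHom.id_apply, Pi.smul_apply, smul_eq_mul, Finset.mul_sum]
    refine Finset.sum_congr rfl fun v _ => ?_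
    by_cases h : (σ.1.erase v).card = d ∧ ((σ.1.erase v) ∈ X ∨ σ.1.erase v = ∅)
    · simp only [dif_pos h, Pi.smul_apply, smul_eq_mul]; ring
    · simp [h]

/-- The `j`-th reduced Betti number over `ℚ`: the dimension of
`ker δ^j / im δ^{j−1}` (where `δ^{−1} : ℚ → C^0` sends `a` to the constant `a`). -/
noncomputable def betti (X : Finset (Finset V)) (j : ℕ) : ℕ :=
  Module.finrank ℚ
    (↥(LinearMap.ker (delta X (j + 1))) ⧸
      Submodule.comap (LinearMap.ker (delta X (j + 1))).subtype
        (LinearMap.range (delta X j)))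

/-- The set of maximal faces of `X` with `k+1` elements. -/
def maxKFaces (X : Finset (Finset V)) (k : ℕ) : Finset (Finset V) :=
  X.filter (fun A => A.card = k + 1 ∧ ∀ B ∈ X, A ⊆ B → B = A)

/-!
The indicator cochains of the maximal `k`-faces are `k`-cocycles, since no `(k+1)`-face
contains a maximal face. As `β_k(X) < m`, their classes are linearly dependent, so some nonzero
combination `c` of them is a coboundary `δg`. On `X'` the cochain `g` is a cocycle, because `δg`
vanishes away from the removed faces. It is not a coboundary there: `X` and `X'` have the same
faces of dimension below `k`, so `g = δh` on `X'` would give `g = δh` on `X` and `c = δδh = 0`.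
-/

open Finset

section Faces

variable {V : Type*}

abbrev Face (X : Finset (Finset V)) (d : ℕ) : Type _ :=
  {σ : Finset V // σ.card = d ∧ (σ ∈ X ∨ σ = ∅)}

instance (X : Finset (Finset V)) (d : ℕ) : Finite (Face X d) :=
  Set.Finite.to_subtype <| (X.finite_toSet.insert ∅).subset fun σ hσ => by
    simpa [or_comm] using hσ.2

lemma Face.val_mem {X : Finset (Finset V)} {d : ℕ} (τ : Face X (d + 1)) : τ.1 ∈ X :=
  τ.2.2.resolve_right fun h => by simpa [h] using τ.2.1

variable {X Y : Finset (Finset V)} (hYX : Y ⊆ X)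

def Face.inclusion {d : ℕ} (τ : Face Y d) : Face X d := ⟨τ.1, τ.2.1, τ.2.2.imp_left (@hYX _)⟩

namespace Coch

def restrict (d : ℕ) : Coch X d →ₗ[ℚ] Coch Y d := LinearMap.funLeft ℚ ℚ (Face.inclusion hYX)

lemma restrict_surjective (d : ℕ) : Function.Surjective (restrict hYX d) :=
  LinearMap.funLeft_surjective_of_injective _ _ _ fun _ _ h =>
    Subtype.ext (congrArg Subtype.val h :)

lemma restrict_injective {d : ℕ} (hface : ∀ σ ∈ X, σ.card = d → σ ∈ Y) :
    Function.Injective (restrict hYX d) :=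
  LinearMap.funLeft_injective_of_surjective _ _ _ fun τ =>
    ⟨⟨τ.1, τ.2.1, τ.2.2.imp_left (hface _ · τ.2.1)⟩, rfl⟩

def extendByZero [DecidableEq V] {d : ℕ} (f : Coch X d) (τ : Finset V) : ℚ :=
  if h : τ.card = d ∧ (τ ∈ X ∨ τ = ∅) then f ⟨τ, h⟩ else 0

lemma extendByZero_restrict [DecidableEq V] {d : ℕ} (hface : ∀ σ ∈ X, σ.card = d → σ ∈ Y)
    (f : Coch X d) : extendByZero (restrict hYX d f) = extendByZero f := by
  funext τ
  by_cases hτ : τ.card = d ∧ (τ ∈ X ∨ τ = ∅)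
  · rw [extendByZero, extendByZero, dif_pos hτ,
      dif_pos ⟨hτ.1, hτ.2.imp_left (hface _ · hτ.1)⟩]
    rfl
  · rw [extendByZero, extendByZero, dif_neg hτ,
      dif_neg fun h => hτ ⟨h.1, h.2.imp_left (@hYX _)⟩]

end Coch

end Faces

lemma Finset.sum_sum_erase_eq_zero_of_antisymm {α M : Type*} [DecidableEq α] [AddCommGroup M]
    (s : Finset α) (F : α → α → M) (hF : ∀ v ∈ s, ∀ w ∈ s, v ≠ w → F v w = -F w v) :
    ∑ v ∈ s, ∑ w ∈ s.erase v, F v w = 0 := by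
  rw [← show ∑ p ∈ s.offDiag, F p.1 p.2 = _ from
    sum_finset_product _ s (fun v => s.erase v) (by simp [and_comm, eq_comm])]
  refine sum_involution (fun p _ => p.swap) (fun p hp => ?_) (fun p hp _ => ?_)
    (fun p hp => ?_) (fun _ _ => rfl)
  · obtain ⟨hv, hw, hvw⟩ := mem_offDiag.mp hp
    simp [hF _ hv _ hw hvw]
  · exact fun h => (mem_offDiag.mp hp).2.2 (congrArg Prod.fst h).symm
  · obtain ⟨hv, hw, hvw⟩ := mem_offDiag.mp hp
    exact mem_offDiag.mpr ⟨hw, hv, hvw.symm⟩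

section Coboundary

variable {V : Type*} [LinearOrder V]

def incidenceSign (σ : Finset V) (v : V) : ℚ := (-1) ^ #(σ.filter (· < v))

lemma delta_apply (X : Finset (Finset V)) (d : ℕ) (f : Coch X d) (σ : Face X (d + 1)) :
    delta X d f σ = ∑ v ∈ σ.1, incidenceSign σ.1 v * Coch.extendByZero f (σ.1.erase v) := rfl

lemma incidenceSign_mul_incidenceSign_erase {σ : Finset V} {v w : V} (hw : w ∈ σ)
    (h : w < v) :
    incidenceSign σ v * incidenceSign (σ.erase v) w =
      -(incidenceSign σ w * incidenceSign (σ.erase w) v) := by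
  have hv : (σ.erase v).filter (· < w) = σ.filter (· < w) := by
    rw [filter_erase]
    exact erase_eq_of_notMem (by simp [not_lt.mpr h.le])
  have hwv : w ∈ σ.filter (· < v) := mem_filter.mpr ⟨hw, h⟩
  obtain ⟨c, hc⟩ : ∃ c, #(σ.filter (· < v)) = c + 1 :=
    Nat.exists_eq_add_one.mpr (card_pos.mpr ⟨w, hwv⟩)
  simp only [incidenceSign, hv, filter_erase, card_erase_of_mem hwv, hc, Nat.add_sub_cancel,
    pow_succ]
  ring

lemma delta_delta {X : Finset (Finset V)} (hdc : ∀ A ∈ X, ∀ B ⊆ A, B.Nonempty → B ∈ X)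
    (d : ℕ) (f : Coch X d) : delta X (d + 1) (delta X d f) = 0 := by
  funext σ
  have hface (v) (hv : v ∈ σ.1) :
      (σ.1.erase v).card = d + 1 ∧ (σ.1.erase v ∈ X ∨ σ.1.erase v = ∅) := by
    have hcard : (σ.1.erase v).card = d + 1 := by rw [card_erase_of_mem hv, σ.2.1]; rfl
    exact ⟨hcard, .inl <| hdc _ (Face.val_mem σ) _ (erase_subset _ _) (card_pos.mp (by omega))⟩
  set F : V → V → ℚ := fun v w => incidenceSign σ.1 v * incidenceSign (σ.1.erase v) w *
    Coch.extendByZero f ((σ.1.erase v).erase w)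
  have hF (v) (hv : v ∈ σ.1) (w) (hw : w ∈ σ.1) (hvw : v ≠ w) : F v w = -F w v := by
    have hsign : incidenceSign σ.1 v * incidenceSign (σ.1.erase v) w =
        -(incidenceSign σ.1 w * incidenceSign (σ.1.erase w) v) := by
      rcases hvw.lt_or_gt with hlt | hgt
      · rw [incidenceSign_mul_incidenceSign_erase hv hlt, neg_neg]
      · exact incidenceSign_mul_incidenceSign_erase hw hgt
    simp only [F, hsign, erase_right_comm (a := v), neg_mul]
  rw [Pi.zero_apply, delta_apply, ← sum_sum_erase_eq_zero_of_antisymm σ.1 F hF]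
  refine sum_congr rfl fun v hv => ?_
  rw [Coch.extendByZero, dif_pos (hface v hv), delta_apply, mul_sum]
  exact sum_congr rfl fun w _ => (mul_assoc _ _ _).symm

lemma delta_eq_zero_of_maximal {X : Finset (Finset V)} {d : ℕ} {f : Coch X d}
    (hf : ∀ τ : Face X d, f τ ≠ 0 → Maximal (· ∈ X) τ.1) : delta X d f = 0 := by
  funext σ
  rw [Pi.zero_apply, delta_apply]
  refine sum_eq_zero fun v hv => ?_
  suffices Coch.extendByZero f (σ.1.erase v) = 0 by rw [this, mul_zero]
  rw [Coch.extendByZero]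
  split_ifs with h
  · by_contra hne
    exact notMem_erase v σ.1 ((hf _ hne).2 (Face.val_mem σ) (erase_subset v σ.1) hv)
  · rfl

lemma delta_restrict {X Y : Finset (Finset V)} (hYX : Y ⊆ X) {d : ℕ}
    (hface : ∀ σ ∈ X, σ.card = d → σ ∈ Y) (f : Coch X d) :
    delta Y d (Coch.restrict hYX d f) = Coch.restrict hYX (d + 1) (delta X d f) := by
  funext σ
  rw [delta_apply, Coch.extendByZero_restrict hYX hface]
  rfl

end Coboundary

section Cohomology

variable {V : Type*} [LinearOrder V]

abbrev ReducedCohomology (X : Finset (Finset V)) (j : ℕ) : Type _ :=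
  ↥(LinearMap.ker (delta X (j + 1))) ⧸
    Submodule.comap (LinearMap.ker (delta X (j + 1))).subtype (LinearMap.range (delta X j))

lemma betti_pos_of_notMem_range {X : Finset (Finset V)} {j : ℕ} {g : Coch X (j + 1)}
    (hg : delta X (j + 1) g = 0) (hg' : g ∉ LinearMap.range (delta X j)) : 0 < betti X j :=
  Module.finrank_pos_iff.mpr <| nontrivial_of_ne (Submodule.Quotient.mk ⟨g, hg⟩) 0 <| by
    rwa [Ne, Submodule.Quotient.mk_eq_zero, Submodule.mem_comap]

lemma exists_coboundary_supported_of_betti_lt {X M : Finset (Finset V)} {k : ℕ}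
    (hM : ∀ σ ∈ M, σ.card = k + 1 ∧ Maximal (· ∈ X) σ) (hb : betti X k < #M) :
    ∃ f : Coch X (k + 1), f ≠ 0 ∧ (∀ τ : Face X (k + 1), τ.1 ∉ M → f τ = 0) ∧
      f ∈ LinearMap.range (delta X k) := by
  by_contra! hnone
  let L : (M → ℚ) →ₗ[ℚ] Coch X (k + 1) :=
    LinearMap.pi fun τ => if h : τ.1 ∈ M then LinearMap.proj ⟨τ.1, h⟩ else 0
  have hL_supp (a : M → ℚ) (τ : Face X (k + 1)) (hτ : τ.1 ∉ M) : L a τ = 0 := by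
    simp [L, hτ]
  have hL_eval (a : M → ℚ) (σ : M) :
      L a ⟨σ.1, (hM σ σ.2).1, .inl (hM σ σ.2).2.1⟩ = a σ := by
    simp [L]
  have hL_cocycle (a : M → ℚ) : delta X (k + 1) (L a) = 0 :=
    delta_eq_zero_of_maximal fun τ hτ => by
      by_cases h : τ.1 ∈ M
      · exact (hM _ h).2
      · exact absurd (hL_supp a τ h) hτ
  let φ : (M → ℚ) →ₗ[ℚ] ReducedCohomology X k :=
    Submodule.mkQ _ ∘ₗ (L.codRestrict _ hL_cocycle)
  have hφ : Function.Injective φ := by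
    refine (injective_iff_map_eq_zero φ).mpr fun a ha => ?_
    rw [LinearMap.comp_apply, Submodule.mkQ_apply, Submodule.Quotient.mk_eq_zero,
      Submodule.mem_comap] at ha
    by_contra ha0
    refine hnone (L a) (fun hLa => ha0 (funext fun σ => ?_)) (hL_supp a) ha
    rw [← hL_eval a σ, hLa, Pi.zero_apply, Pi.zero_apply]
  have := LinearMap.finrank_le_finrank_of_injective hφ
  rw [Module.finrank_fintype_fun_eq_card, Fintype.card_coe] at this
  exact absurd hb (not_lt.mpr this)

lemma betti_pos_of_coboundary_supported {X M : Finset (Finset V)}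
    (hdc : ∀ A ∈ X, ∀ B ⊆ A, B.Nonempty → B ∈ X) {j : ℕ} (hM : ∀ σ ∈ M, σ.card = j + 2)
    {f : Coch X (j + 2)} (hf0 : f ≠ 0) (hsupp : ∀ τ : Face X (j + 2), τ.1 ∉ M → f τ = 0)
    (hf : f ∈ LinearMap.range (delta X (j + 1))) : 0 < betti (X \ M) j := by
  obtain ⟨g, rfl⟩ := hf
  have hYX : X \ M ⊆ X := sdiff_subset
  have hface {d : ℕ} (hd : d ≠ j + 2) (σ) (hσ : σ ∈ X) (hc : σ.card = d) : σ ∈ X \ M :=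
    mem_sdiff.mpr ⟨hσ, fun hσM => hd (hc ▸ hM σ hσM)⟩
  refine betti_pos_of_notMem_range (g := Coch.restrict hYX (j + 1) g) ?_ ?_
  · rw [delta_restrict hYX (hface (by omega))]
    funext τ
    exact hsupp _ (mem_sdiff.mp (Face.val_mem τ)).2
  · rintro ⟨h', hh'⟩
    obtain ⟨h, rfl⟩ := Coch.restrict_surjective hYX j h'
    rw [delta_restrict hYX (hface (by omega))] at hh'
    rw [← Coch.restrict_injective hYX (hface (by omega)) hh'] at hf0
    exact hf0 (delta_delta hdc j h)

end Cohomology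

lemma card_eq_and_maximal_of_mem_maxKFaces {V : Type*} [Fintype V] [LinearOrder V]
    {X : Finset (Finset V)} {k : ℕ} {σ : Finset V} (hσ : σ ∈ maxKFaces X k) :
    σ.card = k + 1 ∧ Maximal (· ∈ X) σ := by
  obtain ⟨hσX, hcard, hmax⟩ := mem_filter.mp hσ
  exact ⟨hcard, hσX, fun B hB hσB => (hmax B hB hσB).le⟩

theorem betti_pred_removed_ge_one_of_lt_general {V : Type*} [Fintype V] [LinearOrder V]
    (k m : ℕ) (hk : 1 ≤ k)
    (X : Finset (Finset V))
    (hdc : ∀ A ∈ X, ∀ B ⊆ A, B.Nonempty → B ∈ X)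
    (hm : (maxKFaces X k).card = m)
    (hb : betti X k < m) :
    1 ≤ betti (X \ maxKFaces X k) (k - 1) := by
  obtain ⟨j, rfl⟩ := Nat.exists_eq_add_of_le' hk
  obtain ⟨f, hf0, hsupp, hf⟩ := exists_coboundary_supported_of_betti_lt
    (fun σ hσ => card_eq_and_maximal_of_mem_maxKFaces hσ) (hm ▸ hb)
  exact betti_pos_of_coboundary_supported hdc
    (fun σ hσ => (card_eq_and_maximal_of_mem_maxKFaces hσ).1) hf0 hsupp hf

/-- Let `k ≥ 1`, `m ≥ 1`, let `X` be an abstract simplicial complex on a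
finite linearly ordered vertex set with exactly `m` maximal `k`-faces, and let `X'` be
obtained from `X` by deleting all of these maximal `k`-faces.
If `β_k(X) < m` then `β_{k−1}(X') ≥ 1`. -/
theorem betti_pred_removed_ge_one_of_lt {V : Type*} [Fintype V] [LinearOrder V]
    (k m : ℕ) (hk : 1 ≤ k) (hm1 : 1 ≤ m)
    (X : Finset (Finset V))
    (hne : ∀ A ∈ X, A.Nonempty)
    (hdc : ∀ A ∈ X, ∀ B ⊆ A, B.Nonempty → B ∈ X)
    (hm : (maxKFaces X k).card = m)
    (hb : betti X k < m) :
    1 ≤ betti (X \ maxKFaces X k) (k - 1) :=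
  betti_pred_removed_ge_one_of_lt_general k m hk X hdc hm hb
end

section
/- Let k ≥ 1 and n ≥ k+2 be integers and t ∈ [0,1]. In the random clique complex model, define the event A := {U({1,2}) > t} ∩ {U({l,m}) ≤ U({1,2}) for all 1 ≤ l < m ≤ k+1} ∩ ⋂_{p=k+2}^{n} {U({p,l}) > U({1,2}) for some 1 ≤ l ≤ k+1}. Then P(A) = ∫_t^1 s^{C(k+1,2) − 1} (1 − s^{k+1})^{n−k−1} ds, where C(k+1,2) = (k+1)k/2. -/
open MeasureTheory

/-- Index type: unordered pairs of distinct elements of `Fin n`. -/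
abbrev EdgeIdx (n : ℕ) := {e : Sym2 (Fin n) // ¬ e.IsDiag}

noncomputable instance (n : ℕ) : Fintype (EdgeIdx n) := Fintype.ofFinite _

/-- Uniform probability measure on `[0,1]`. -/
noncomputable def unif : Measure ℝ := volume.restrict (Set.Icc 0 1)

/-- The product measure: i.i.d. Uniform[0,1] edge weights. -/
noncomputable def Pn (n : ℕ) : Measure (EdgeIdx n → ℝ) := Measure.pi fun _ => unif

/-- The weight of the pair `{i,j}` (defined to be `0` if `i = j`, a junk value never used). -/
noncomputable def eV {n : ℕ} (ω : EdgeIdx n → ℝ) (i j : Fin n) : ℝ :=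
  if h : i = j then 0 else ω ⟨s(i, j), by simp [Sym2.mk_isDiag_iff, h]⟩

/-- `σ` is a clique of `G(n,t)`: every pair of distinct elements of `σ` is an edge. -/
def IsClique {n : ℕ} (ω : EdgeIdx n → ℝ) (t : ℝ) (σ : Finset (Fin n)) : Prop :=
  ∀ i ∈ σ, ∀ j ∈ σ, i ≠ j → eV ω i j ≤ t

/-- `σ` is a maximal `(k+1)`-element clique of `G(n,t)`. -/
def IsMaxClique {n : ℕ} (k : ℕ) (ω : EdgeIdx n → ℝ) (t : ℝ) (σ : Finset (Fin n)) : Prop :=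
  σ.card = k + 1 ∧ IsClique ω t σ ∧ ∀ p, p ∉ σ → ∃ i ∈ σ, t < eV ω p i

/-- `N_k(t)`: the number of maximal `(k+1)`-element cliques of `G(n,t)`. -/
noncomputable def Nk {n : ℕ} (k : ℕ) (t : ℝ) (ω : EdgeIdx n → ℝ) : ℕ :=
  Nat.card {σ : Finset (Fin n) // IsMaxClique k ω t σ}

/-- `N*_k(t)`: the number of `(k+1)`-element subsets that are maximal cliques
of `G(n,s)` for some `s ∈ [t,1]`. -/
noncomputable def NkStar {n : ℕ} (k : ℕ) (t : ℝ) (ω : EdgeIdx n → ℝ) : ℕ :=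
  Nat.card {σ : Finset (Fin n) // ∃ s, t ≤ s ∧ s ≤ 1 ∧ IsMaxClique k ω s σ}

/-- The critical window time `t_c(k,n)`. -/
noncomputable def tc (k : ℕ) (c : ℝ) (n : ℕ) : ℝ :=
  ((((k : ℝ) / 2 + 1) * Real.log n + ((k : ℝ) / 2) * Real.log (Real.log n) + c) / n)
    ^ ((1 : ℝ) / (k + 1))

/-- `μ(k,c) = ((k/2+1)^(k/2)/(k+1)!) e^{-c}`. -/
noncomputable def muk (k : ℕ) (c : ℝ) : ℝ :=
  (((k : ℝ) / 2 + 1) ^ ((k : ℝ) / 2) / (Nat.factorial (k + 1))) * Real.exp (-c)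

/-!
Condition on the weight `s` of the edge `e₀ = {1,2}`. Given `s > t`, the event asks that the
other `C(k+1,2) - 1` edges inside `σ = {1,…,k+1}` weigh at most `s`, and that each of the
`n - k - 1` vertices `p ∉ σ` has an edge to `σ` weighing more than `s`. These conditions concern
pairwise disjoint sets of edges, so they are independent, with probabilities `s` per inner edge
and `1 - s^(k+1)` per outside vertex; integrating over `s ∈ (t, 1]` gives the formula.
-/

open Finset ProbabilityTheory Function
open scoped ENNReal

theorem ProbabilityTheory.iIndepFun.measure_biInter_eq_prod {Ω ι κ : Type*}
    {_ : MeasurableSpace Ω} {μ : Measure Ω} {β : ι → Type*} [∀ i, MeasurableSpace (β i)]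
    {f : ∀ i, Ω → β i} (hf_indep : iIndepFun f μ) (hf : ∀ i, Measurable (f i))
    {B : κ → Finset ι} {J : Finset κ} (hB : (J : Set κ).PairwiseDisjoint B) {S : κ → Set Ω}
    (hS : ∀ j ∈ J, MeasurableSet[MeasurableSpace.pi.comap fun ω (i : B j) => f i ω] (S j)) :
    μ (⋂ j ∈ J, S j) = ∏ j ∈ J, μ (S j) := by
  classical
  have := hf_indep.isProbabilityMeasure
  induction J using Finset.induction_on with
  | empty => simp
  | insert j J hj ih =>
    rw [Finset.set_biInter_insert, Finset.prod_insert hj,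
      ← ih (hB.subset (by simp)) fun j' hj' => hS j' (mem_insert_of_mem hj')]
    have hdisj : Disjoint (B j) (J.biUnion B) :=
      (disjoint_biUnion_right _ _ _).2 fun j' hj' =>
        hB (by simp) (by simp [hj']) (by rintro rfl; exact hj hj')
    have hle : ∀ j' ∈ J, MeasurableSpace.pi.comap (fun ω (i : B j') => f i ω)
        ≤ MeasurableSpace.pi.comap (fun ω (i : J.biUnion B) => f i ω) := fun j' hj' => by
      rw [show (fun ω (i : B j') => f i ω)
          = restrict₂ (subset_biUnion_of_mem B hj') ∘ fun ω (i : J.biUnion B) => f i ω from rfl,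
        ← MeasurableSpace.comap_comp]
      exact MeasurableSpace.comap_mono (measurable_restrict₂ _).comap_le
    exact (hf_indep.indepFun_finset _ _ hdisj hf).meas_inter (hS j (mem_insert_self _ _))
      (.biInter J.countable_toSet fun j' hj' =>
        hle j' hj' _ (hS j' (mem_insert_of_mem hj')))

theorem MeasureTheory.Measure.pi_eq_lintegral_update {ι : Type*} [Fintype ι] [DecidableEq ι]
    {X : ι → Type*} [∀ i, MeasurableSpace (X i)] (μ : ∀ i, Measure (X i))
    [∀ i, IsProbabilityMeasure (μ i)] (i : ι) {S : Set (∀ i, X i)} (hS : MeasurableSet S) :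
    Measure.pi μ S = ∫⁻ a, Measure.pi μ ((update · i a) ⁻¹' S) ∂μ i := by
  set f := S.indicator (1 : (∀ i, X i) → ℝ≥0∞)
  have hf : Measurable f := measurable_one.indicator hS
  have hfu : Measurable (uncurry fun x a => f (update x i a)) := hf.comp measurable_update'
  set g := fun x => ∫⁻ a, f (update x i a) ∂μ i
  -- The `i`-marginal of `f` is `g`, which ignores the coordinate `i` and so is its own.
  have hmarg : (∫⋯∫⁻_{i}, f ∂μ) = ∫⋯∫⁻_{i}, g ∂μ := by
    simp [g, lmarginal_singleton]
  rw [← lintegral_indicator_one hS, lintegral_eq_of_lmarginal_eq {i} (g := g) hf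
    hfu.lintegral_prod_right' hmarg, lintegral_lintegral_swap hfu.aemeasurable]
  refine lintegral_congr fun a => ?_
  rw [← lintegral_indicator_one (measurable_update_left hS)]
  rfl

lemma pi_biInter_le {ι : Type*} [Fintype ι] (ν : Measure ℝ) [IsProbabilityMeasure ν]
    (B : Finset ι) (s : ℝ) :
    Measure.pi (fun _ : ι => ν) (⋂ i ∈ B, {x | x i ≤ s}) = ν (Set.Iic s) ^ #B := by
  have : ⋂ i ∈ B, {x : ι → ℝ | x i ≤ s} = (B : Set ι).pi fun _ => Set.Iic s := by ext; simp
  rw [this, Measure.pi_pi_finset, prod_const]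

lemma pi_biUnion_lt {ι : Type*} [Fintype ι] (ν : Measure ℝ) [IsProbabilityMeasure ν]
    (B : Finset ι) (s : ℝ) :
    Measure.pi (fun _ : ι => ν) (⋃ i ∈ B, {x | s < x i}) = 1 - ν (Set.Iic s) ^ #B := by
  have : ⋃ i ∈ B, {x : ι → ℝ | s < x i} = (⋂ i ∈ B, {x | x i ≤ s})ᶜ := by ext; simp
  rw [this, prob_compl_eq_one_sub (B.measurableSet_biInter fun i _ =>
    measurableSet_le (measurable_pi_apply i) measurable_const), pi_biInter_le]

lemma measurable_comap_restrict_apply {ι β : Type*} [MeasurableSpace β] {B : Finset ι} {i : ι}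
    (hi : i ∈ B) : Measurable[MeasurableSpace.pi.comap fun (x : ι → β) (j : B) => x j] (· i) :=
  (measurable_pi_apply (⟨i, hi⟩ : B)).comp (comap_measurable fun (x : ι → β) (j : B) => x j)

instance : IsProbabilityMeasure unif :=
  ⟨by rw [unif, Measure.restrict_apply_univ, Real.volume_Icc]; norm_num⟩

lemma unif_Iic {s : ℝ} (hs : s ≤ 1) : unif (Set.Iic s) = ENNReal.ofReal s := by
  have : Set.Iic s ∩ Set.Icc 0 1 = Set.Icc 0 s := by
    ext x; simp only [Set.mem_inter_iff, Set.mem_Iic, Set.mem_Icc]; grind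
  rw [unif, Measure.restrict_apply measurableSet_Iic, this, Real.volume_Icc, sub_zero]

lemma unif_restrict_Ioi {t : ℝ} (ht : 0 ≤ t) :
    unif.restrict (Set.Ioi t) = volume.restrict (Set.Ioc t 1) := by
  have : Set.Ioi t ∩ Set.Icc 0 1 = Set.Ioc t 1 := by
    ext x; simp only [Set.mem_inter_iff, Set.mem_Ioi, Set.mem_Icc, Set.mem_Ioc]; grind
  rw [unif, Measure.restrict_restrict measurableSet_Ioi, this]

lemma toReal_setLIntegral_unif_Ioi {t : ℝ} (ht : t ∈ Set.Icc (0 : ℝ) 1) (i j m : ℕ) :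
    (∫⁻ s in Set.Ioi t, unif (Set.Iic s) ^ i * (1 - unif (Set.Iic s) ^ j) ^ m ∂unif).toReal
      = ∫ s in t..1, s ^ i * (1 - s ^ j) ^ m := by
  obtain ⟨ht0, ht1⟩ := ht
  have hg : ∀ s ∈ Set.Ioc t 1, 0 ≤ s ^ i * (1 - s ^ j) ^ m := fun s hs =>
    mul_nonneg (pow_nonneg (ht0.trans hs.1.le) _)
      (pow_nonneg (sub_nonneg.2 (pow_le_one₀ (ht0.trans hs.1.le) hs.2)) _)
  have hofReal : ∫⁻ s in Set.Ioi t, unif (Set.Iic s) ^ i * (1 - unif (Set.Iic s) ^ j) ^ m ∂unif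
      = ∫⁻ s in Set.Ioc t 1, ENNReal.ofReal (s ^ i * (1 - s ^ j) ^ m) := by
    rw [unif_restrict_Ioi ht0]
    refine setLIntegral_congr_fun measurableSet_Ioc fun s hs => ?_
    have hs0 : 0 ≤ s := ht0.trans hs.1.le
    rw [unif_Iic hs.2, ENNReal.ofReal_mul (pow_nonneg hs0 _), ENNReal.ofReal_pow hs0,
      ENNReal.ofReal_pow (sub_nonneg.2 (pow_le_one₀ hs0 hs.2)),
      ENNReal.ofReal_sub _ (pow_nonneg hs0 _), ENNReal.ofReal_one, ENNReal.ofReal_pow hs0]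
  rw [hofReal, ← ofReal_integral_eq_lintegral_ofReal
      (by fun_prop : Continuous fun s : ℝ => s ^ i * (1 - s ^ j) ^ m).integrableOn_Ioc
      ((ae_restrict_iff' measurableSet_Ioc).2 (.of_forall hg)),
    ENNReal.toReal_ofReal (setIntegral_nonneg measurableSet_Ioc hg),
    intervalIntegral.integral_of_le ht1]

section Edges

variable {n : ℕ}

lemma eV_of_val_eq (ω : EdgeIdx n → ℝ) {e : EdgeIdx n} {i j : Fin n} (he : e.1 = s(i, j)) :
    eV ω i j = ω e := by
  have hij : i ≠ j := by simpa [he] using e.2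
  rw [eV, dif_neg hij]
  exact congrArg ω (Subtype.ext he.symm)

lemma eV_comm (ω : EdgeIdx n → ℝ) (i j : Fin n) : eV ω i j = eV ω j i := by
  by_cases hij : i = j
  · rw [hij]
  · let e : EdgeIdx n := ⟨s(i, j), by simpa⟩
    rw [eV_of_val_eq ω (e := e) rfl, eV_of_val_eq ω (e := e) Sym2.eq_swap]

def innerEdges (σ : Finset (Fin n)) : Finset (EdgeIdx n) :=
  (σ.offDiag.image Sym2.mk.uncurry).subtype (¬ ·.IsDiag)

def starEdges (p : Fin n) (σ : Finset (Fin n)) : Finset (EdgeIdx n) :=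
  (σ.image (s(p, ·))).subtype (¬ ·.IsDiag)

lemma card_innerEdges (σ : Finset (Fin n)) : #(innerEdges σ) = (#σ).choose 2 := by
  rw [innerEdges, card_subtype, filter_true_of_mem, Sym2.card_image_offDiag]
  rintro _ hz
  obtain ⟨⟨i, j⟩, hij, rfl⟩ := mem_image.1 hz
  exact not_isDiag_mk_of_mem_offDiag hij

lemma card_starEdges {p : Fin n} {σ : Finset (Fin n)} (hp : p ∉ σ) : #(starEdges p σ) = #σ := by
  rw [starEdges, card_subtype, filter_true_of_mem, card_image_of_injective _
    fun _ _ => Sym2.congr_right.1]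
  rintro _ hz
  obtain ⟨l, hl, rfl⟩ := mem_image.1 hz
  simpa using ne_of_mem_of_not_mem hl hp |>.symm

lemma mem_innerEdges {σ : Finset (Fin n)} {e : EdgeIdx n} :
    e ∈ innerEdges σ ↔ ∃ i ∈ σ, ∃ j ∈ σ, e.1 = s(i, j) := by
  simp only [innerEdges, mem_subtype, mem_image, mem_offDiag, Prod.exists]
  constructor
  · rintro ⟨i, j, ⟨hi, hj, -⟩, he⟩
    exact ⟨i, hi, j, hj, he.symm⟩
  · rintro ⟨i, hi, j, hj, he⟩
    exact ⟨i, j, ⟨hi, hj, by simpa [he] using e.2⟩, he.symm⟩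

lemma mem_starEdges {p : Fin n} {σ : Finset (Fin n)} {e : EdgeIdx n} :
    e ∈ starEdges p σ ↔ ∃ l ∈ σ, e.1 = s(p, l) := by
  simp only [starEdges, mem_subtype, mem_image, eq_comm]

lemma disjoint_innerEdges_starEdges {p : Fin n} {σ : Finset (Fin n)} (hp : p ∉ σ) :
    Disjoint (innerEdges σ) (starEdges p σ) := by
  refine disjoint_left.2 fun e he he' => hp ?_
  obtain ⟨i, hi, j, hj, he⟩ := mem_innerEdges.1 he
  obtain ⟨l, -, he'⟩ := mem_starEdges.1 he'
  have : p ∈ s(i, j) := he ▸ he' ▸ Sym2.mem_mk_left p l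
  rcases Sym2.mem_iff.1 this with rfl | rfl <;> assumption

lemma disjoint_starEdges {p q : Fin n} {σ : Finset (Fin n)} (hp : p ∉ σ) (hpq : p ≠ q) :
    Disjoint (starEdges p σ) (starEdges q σ) := by
  refine disjoint_left.2 fun e he he' => ?_
  obtain ⟨l, -, he⟩ := mem_starEdges.1 he
  obtain ⟨l', hl', he'⟩ := mem_starEdges.1 he'
  rcases Sym2.eq_iff.1 (he.symm.trans he') with ⟨rfl, -⟩ | ⟨rfl, -⟩
  exacts [hpq rfl, hp hl']

lemma isClique_iff_forall_innerEdges {ω : EdgeIdx n → ℝ} {s : ℝ} {σ : Finset (Fin n)} :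
    IsClique ω s σ ↔ ∀ e ∈ innerEdges σ, ω e ≤ s := by
  constructor
  · intro h e he
    obtain ⟨i, hi, j, hj, he⟩ := mem_innerEdges.1 he
    rw [← eV_of_val_eq ω he]
    exact h i hi j hj (by simpa [he] using e.2)
  · intro h i hi j hj hij
    rw [eV_of_val_eq ω (e := ⟨s(i, j), by simpa⟩) rfl]
    exact h _ (mem_innerEdges.2 ⟨i, hi, j, hj, rfl⟩)

lemma exists_lt_eV_iff_exists_starEdges {ω : EdgeIdx n → ℝ} {s : ℝ} {p : Fin n}
    {σ : Finset (Fin n)} (hp : p ∉ σ) : (∃ i ∈ σ, s < eV ω p i) ↔ ∃ e ∈ starEdges p σ, s < ω e := by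
  constructor
  · rintro ⟨i, hi, hs⟩
    have hpi : p ≠ i := ne_of_mem_of_not_mem hi hp |>.symm
    let e : EdgeIdx n := ⟨s(p, i), by simpa⟩
    exact ⟨e, mem_starEdges.2 ⟨i, hi, rfl⟩, eV_of_val_eq ω (e := e) rfl ▸ hs⟩
  · rintro ⟨e, he, hs⟩
    obtain ⟨i, hi, he⟩ := mem_starEdges.1 he
    exact ⟨i, hi, (eV_of_val_eq ω he).symm ▸ hs⟩

lemma isClique_iff_forall_lt {ω : EdgeIdx n → ℝ} {s : ℝ} {σ : Finset (Fin n)} :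
    IsClique ω s σ ↔ ∀ i ∈ σ, ∀ j ∈ σ, i < j → eV ω i j ≤ s := by
  refine ⟨fun h i hi j hj hij => h i hi j hj hij.ne, fun h i hi j hj hij => ?_⟩
  rcases hij.lt_or_gt with hij | hij
  · exact h i hi j hj hij
  · exact eV_comm ω i j ▸ h j hj i hi hij

lemma pi_innerEdges_le_and_starEdges_lt (ν : Measure ℝ) [IsProbabilityMeasure ν]
    {σ : Finset (Fin n)} {e₀ : EdgeIdx n} (he₀ : e₀ ∈ innerEdges σ) (s : ℝ) :
    Measure.pi (fun _ : EdgeIdx n => ν)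
        {x | (∀ e ∈ (innerEdges σ).erase e₀, x e ≤ s) ∧ ∀ p ∉ σ, ∃ e ∈ starEdges p σ, s < x e}
      = ν (Set.Iic s) ^ ((#σ).choose 2 - 1) * (1 - ν (Set.Iic s) ^ #σ) ^ (n - #σ) := by
  classical
  let B : Option (Fin n) → Finset (EdgeIdx n) :=
    fun j => j.elim ((innerEdges σ).erase e₀) (starEdges · σ)
  let S : Option (Fin n) → Set (EdgeIdx n → ℝ) := fun j =>
    j.elim (⋂ e ∈ B none, {x | x e ≤ s}) fun p => ⋃ e ∈ B (some p), {x | s < x e}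
  have hB : (insertNone σᶜ : Set (Option (Fin n))).PairwiseDisjoint B := by
    rintro (_ | p) hp (_ | q) hq hpq
    · exact absurd rfl hpq
    · exact (disjoint_innerEdges_starEdges (by simpa using hq)).mono_left (erase_subset _ _)
    · exact (disjoint_innerEdges_starEdges (by simpa using hp)).symm.mono_right
        (erase_subset _ _)
    · exact disjoint_starEdges (by simpa using hp) (by simpa using hpq)
  have hS : ∀ j ∈ insertNone σᶜ,
      MeasurableSet[MeasurableSpace.pi.comap fun x (e : B j) => x e] (S j) := by
    rintro (_ | p) -
    · exact .biInter (countable_toSet _) fun e he =>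
        measurableSet_le (measurable_comap_restrict_apply he) measurable_const
    · exact .biUnion (countable_toSet _) fun e he =>
        measurableSet_lt measurable_const (measurable_comap_restrict_apply he)
  have hindep : iIndepFun (fun e (x : EdgeIdx n → ℝ) => x e) (Measure.pi fun _ => ν) :=
    iIndepFun_pi (X := fun _ => id) fun _ => aemeasurable_id
  have hset : {x : EdgeIdx n → ℝ | (∀ e ∈ (innerEdges σ).erase e₀, x e ≤ s) ∧
      ∀ p ∉ σ, ∃ e ∈ starEdges p σ, s < x e} = ⋂ j ∈ insertNone σᶜ, S j := by
    ext x
    simp [S, B, Option.forall]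
  rw [hset, hindep.measure_biInter_eq_prod (fun e => measurable_pi_apply e) hB hS,
    prod_insertNone]
  simp only [S, B, Option.elim_none, Option.elim_some, pi_biInter_le, pi_biUnion_lt]
  rw [card_erase_of_mem he₀, card_innerEdges, prod_congr rfl fun p hp => by
    rw [card_starEdges (mem_compl.1 hp)], prod_const, card_compl, Fintype.card_fin]

theorem pi_lt_eV_and_isMaxClique (ν : Measure ℝ) [IsProbabilityMeasure ν] {k : ℕ}
    {σ : Finset (Fin n)} (hσ : #σ = k + 1) {a b : Fin n} (ha : a ∈ σ) (hb : b ∈ σ) (hab : a ≠ b)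
    (t : ℝ) :
    Measure.pi (fun _ : EdgeIdx n => ν) {ω | t < eV ω a b ∧ IsMaxClique k ω (eV ω a b) σ}
      = ∫⁻ s in Set.Ioi t,
          ν (Set.Iic s) ^ ((k + 1).choose 2 - 1) * (1 - ν (Set.Iic s) ^ (k + 1)) ^ (n - (k + 1))
          ∂ν := by
  let e₀ : EdgeIdx n := ⟨s(a, b), by simpa⟩
  have he₀ : e₀ ∈ innerEdges σ := mem_innerEdges.2 ⟨a, ha, b, hb, rfl⟩
  have hset : {ω | t < eV ω a b ∧ IsMaxClique k ω (eV ω a b) σ} = {ω | t < ω e₀ ∧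
      (∀ e ∈ innerEdges σ, ω e ≤ ω e₀) ∧ ∀ p ∉ σ, ∃ e ∈ starEdges p σ, ω e₀ < ω e} := by
    ext ω
    simp only [Set.mem_ofPred_eq, IsMaxClique, eV_of_val_eq ω (e := e₀) rfl,
      isClique_iff_forall_innerEdges, hσ, true_and]
    exact and_congr_right' <| and_congr_right' <| forall₂_congr fun p hp =>
      exists_lt_eV_iff_exists_starEdges hp
  have hmeas : MeasurableSet {ω : EdgeIdx n → ℝ | t < ω e₀ ∧
      (∀ e ∈ innerEdges σ, ω e ≤ ω e₀) ∧ ∀ p ∉ σ, ∃ e ∈ starEdges p σ, ω e₀ < ω e} := by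
    measurability
  rw [hset, Measure.pi_eq_lintegral_update _ e₀ hmeas, ← lintegral_indicator measurableSet_Ioi]
  refine lintegral_congr fun s => ?_
  by_cases hts : t < s
  · rw [Set.indicator_of_mem (Set.mem_Ioi.2 hts), ← hσ, ← pi_innerEdges_le_and_starEdges_lt ν he₀ s]
    congr 1
    ext x
    simp only [Set.mem_preimage, Set.mem_ofPred_eq, update_self, hts, true_and]
    refine and_congr ⟨fun h e he => ?_, fun h e he => ?_⟩
      (forall₂_congr fun p hp => exists_congr fun e => and_congr_right fun he => ?_)
    · simpa [update_of_ne (ne_of_mem_erase he)] using h e (mem_of_mem_erase he)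
    · by_cases hee : e = e₀
      · simp [hee]
      · simpa [update_of_ne hee] using h e (mem_erase.2 ⟨hee, he⟩)
    · have hee : e ≠ e₀ := fun h =>
        disjoint_left.1 (disjoint_innerEdges_starEdges hp) he₀ (h ▸ he)
      rw [update_of_ne hee]
  · rw [Set.indicator_of_notMem (mt Set.mem_Ioi.1 hts)]
    convert measure_empty (μ := Measure.pi fun _ : EdgeIdx n => ν)
    ext x
    simp [hts]

end Edges

/-- Vertices `0,…,n−1` of `Fin n` play the role of `1,…,n`. -/
theorem prob_become_maximal_eq_integral (k n : ℕ) (hk : 1 ≤ k) (hn : k + 2 ≤ n)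
    (t : ℝ) (ht : t ∈ Set.Icc (0 : ℝ) 1) :
    (Pn n {ω : EdgeIdx n → ℝ |
        t < eV ω ⟨0, by omega⟩ ⟨1, by omega⟩ ∧
        (∀ l m : Fin n, l < m → (m : ℕ) ≤ k → eV ω l m ≤ eV ω ⟨0, by omega⟩ ⟨1, by omega⟩) ∧
        (∀ p : Fin n, k + 1 ≤ (p : ℕ) →
          ∃ l : Fin n, (l : ℕ) ≤ k ∧ eV ω ⟨0, by omega⟩ ⟨1, by omega⟩ < eV ω p l)}).toReal
      = ∫ s in t..1, s ^ (Nat.choose (k + 1) 2 - 1) * (1 - s ^ (k + 1)) ^ (n - k - 1) := by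
  let σ : Finset (Fin n) := Iic ⟨k, by omega⟩
  have hσ : #σ = k + 1 := Fin.card_Iic _
  have hset : {ω : EdgeIdx n → ℝ |
        t < eV ω ⟨0, by omega⟩ ⟨1, by omega⟩ ∧
        (∀ l m : Fin n, l < m → (m : ℕ) ≤ k → eV ω l m ≤ eV ω ⟨0, by omega⟩ ⟨1, by omega⟩) ∧
        (∀ p : Fin n, k + 1 ≤ (p : ℕ) →
          ∃ l : Fin n, (l : ℕ) ≤ k ∧ eV ω ⟨0, by omega⟩ ⟨1, by omega⟩ < eV ω p l)}
      = {ω | t < eV ω ⟨0, by omega⟩ ⟨1, by omega⟩ ∧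
          IsMaxClique k ω (eV ω ⟨0, by omega⟩ ⟨1, by omega⟩) σ} := by
    ext ω
    simp only [Set.mem_ofPred_eq, IsMaxClique, hσ, isClique_iff_forall_lt, true_and, σ, mem_Iic,
      Fin.le_def, not_le]
    exact and_congr_right' <| and_congr_left' ⟨fun h i _ j hj hij => h i j hij hj,
      fun h l m hlm hm => h l ((Fin.lt_def.1 hlm).le.trans hm) m hm hlm⟩
  rw [hset, Pn, pi_lt_eV_and_isMaxClique unif hσ (by simp [σ]) (by simp [σ, hk])
    (by simp [Fin.ext_iff]), toReal_setLIntegral_unif_Ioi ht, Nat.sub_sub]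
end

section
/- Let k ≥ 1 be an integer and c ∈ ℝ, and for n ≥ 3 let t_c(k,n) := (((k/2+1)·log n + (k/2)·log log n + c)/n)^{1/(k+1)}. Then lim_{n→∞} n^{k+1} ∫_{t_c(k,n)}^{1} s^{k(k+1)/2 − 1} e^{−n s^{k+1}} ds = 0. -/
open Filter Real Topology

lemma integral_exp_neg_mul_sub_le {r : ℝ} (hr : 0 < r) (t b : ℝ) :
    ∫ s in t..b, exp (-r * (s - t)) ≤ 1 / r := by
  have h := intervalIntegral.integral_comp_mul_sub exp (a := t) (b := b)
    (neg_ne_zero.2 hr.ne') (-r * t)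
  simp only [integral_exp, sub_self, exp_zero, smul_eq_mul, ← mul_sub] at h
  rw [h, inv_neg, neg_mul, ← mul_neg, neg_sub, ← div_eq_inv_mul]
  gcongr
  linarith [exp_pos (-r * (b - t))]

lemma pow_le_pow_mul_exp {t s : ℝ} (ht : 0 < t) (hs : 0 ≤ s) (m : ℕ) :
    s ^ m ≤ t ^ m * exp (m * ((s - t) / t)) := by
  have h : s ≤ t * exp ((s - t) / t) := by
    calc s = t * ((s - t) / t + 1) := by field_simp; ring
      _ ≤ t * exp ((s - t) / t) := by gcongr; exact add_one_le_exp _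
  calc s ^ m ≤ (t * exp ((s - t) / t)) ^ m := by gcongr
    _ = t ^ m * exp (m * ((s - t) / t)) := by rw [mul_pow, ← exp_nat_mul]

lemma pow_add_mul_sub_le_pow {t s : ℝ} (ht : 0 < t) (hs : 0 ≤ s) (k : ℕ) :
    t ^ (k + 1) + (k + 1) * t ^ k * (s - t) ≤ s ^ (k + 1) := by
  have hbernoulli := one_add_mul_le_pow (a := s / t - 1) (by linarith [div_nonneg hs ht.le]) (k + 1)
  rw [add_sub_cancel] at hbernoulli
  calc t ^ (k + 1) + (k + 1) * t ^ k * (s - t)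
      = t ^ (k + 1) * (1 + ((k + 1 : ℕ) : ℝ) * (s / t - 1)) := by
        push_cast; field_simp; ring
    _ ≤ t ^ (k + 1) * (s / t) ^ (k + 1) := by gcongr
    _ = s ^ (k + 1) := by rw [div_pow]; field_simp

lemma pow_mul_exp_neg_mul_pow_le {m k : ℕ} {x t s : ℝ} (hx : 0 ≤ x) (ht : 0 < t)
    (hts : t ≤ s) :
    s ^ m * exp (-x * s ^ (k + 1)) ≤
      t ^ m * exp (-x * t ^ (k + 1)) *
        exp (-(((k + 1) * x * t ^ (k + 1) - m) / t) * (s - t)) := by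
  have hs : 0 ≤ s := ht.le.trans hts
  have htangent := mul_le_mul_of_nonneg_left (pow_add_mul_sub_le_pow ht hs k) hx
  calc s ^ m * exp (-x * s ^ (k + 1))
      ≤ t ^ m * exp (m * ((s - t) / t)) *
          exp (-x * (t ^ (k + 1) + (k + 1) * t ^ k * (s - t))) := by
        gcongr ?_ * exp ?_
        · exact pow_le_pow_mul_exp ht hs m
        · linarith
    _ = t ^ m * exp (-x * t ^ (k + 1)) *
          exp (-(((k + 1) * x * t ^ (k + 1) - m) / t) * (s - t)) := by
        simp only [mul_assoc, ← exp_add]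
        congr 2
        field_simp
        ring

lemma integral_pow_mul_exp_neg_mul_pow_le {m k : ℕ} {x t b : ℝ} (ht : 0 < t) (htb : t ≤ b)
    (hm : (m : ℝ) < (k + 1) * x * t ^ (k + 1)) :
    ∫ s in t..b, s ^ m * exp (-x * s ^ (k + 1)) ≤
      t ^ (m + 1) * exp (-x * t ^ (k + 1)) / ((k + 1) * x * t ^ (k + 1) - m) := by
  have hx : 0 ≤ x := by
    have hpos : 0 < (k + 1) * x * t ^ (k + 1) := (Nat.cast_nonneg m).trans_lt hm
    exact (pos_of_mul_pos_right (pos_of_mul_pos_left hpos (by positivity)) (by positivity)).le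
  set r := ((k + 1) * x * t ^ (k + 1) - m) / t with hr
  have hr0 : 0 < r := div_pos (sub_pos.2 hm) ht
  calc ∫ s in t..b, s ^ m * exp (-x * s ^ (k + 1))
      ≤ ∫ s in t..b, t ^ m * exp (-x * t ^ (k + 1)) * exp (-r * (s - t)) :=
        intervalIntegral.integral_mono_on htb
          ((by fun_prop : Continuous _).intervalIntegrable _ _)
          ((by fun_prop : Continuous _).intervalIntegrable _ _)
          fun s hs ↦ pow_mul_exp_neg_mul_pow_le hx ht hs.1
    _ = t ^ m * exp (-x * t ^ (k + 1)) * ∫ s in t..b, exp (-r * (s - t)) :=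
        intervalIntegral.integral_const_mul _ _
    _ ≤ t ^ m * exp (-x * t ^ (k + 1)) * (1 / r) := by
        gcongr
        exact integral_exp_neg_mul_sub_le hr0 t b
    _ = t ^ (m + 1) * exp (-x * t ^ (k + 1)) / ((k + 1) * x * t ^ (k + 1) - m) := by
        rw [hr]
        field_simp
        ring

lemma natCast_triangle_sub_one_add_one {k : ℕ} (hk : 1 ≤ k) :
    ((k * (k + 1) / 2 - 1 : ℕ) : ℝ) + 1 = k * (k + 1) / 2 := by
  have htri : k * (k + 1) / 2 = (k + 1).choose 2 := by
    rw [Nat.choose_two_right, Nat.add_sub_cancel, mul_comm]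
  rw [htri, Nat.cast_sub (Nat.choose_pos (by omega)), Nat.cast_choose_two]
  push_cast
  ring

/-- The exponent `n * tc k c n ^ (k + 1)` as a function of `L = log n`. -/
noncomputable def criticalLevel (k : ℕ) (c L : ℝ) : ℝ :=
  ((k : ℝ) / 2 + 1) * L + ((k : ℝ) / 2) * log L + c

lemma tc_eq (k : ℕ) (c : ℝ) (n : ℕ) :
    tc k c n = (criticalLevel k c (log n) / n) ^ ((k + 1 : ℕ) : ℝ)⁻¹ := by
  rw [tc, criticalLevel, one_div]
  push_cast
  rfl

section CriticalLevel

variable {k : ℕ} {c : ℝ} {n : ℕ}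

lemma tc_pos (hn : 0 < n) (hA : 0 < criticalLevel k c (log n)) : 0 < tc k c n := by
  rw [tc_eq]
  positivity

lemma natCast_mul_tc_pow (hn : 0 < n) (hA : 0 ≤ criticalLevel k c (log n)) :
    n * tc k c n ^ (k + 1) = criticalLevel k c (log n) := by
  rw [tc_eq, rpow_inv_natCast_pow (by positivity) k.succ_ne_zero]
  field_simp

lemma tc_le_one (hn : 0 < n) (hA : 0 ≤ criticalLevel k c (log n))
    (hAn : criticalLevel k c (log n) ≤ n) : tc k c n ≤ 1 := by
  rw [tc_eq]
  exact rpow_le_one (by positivity) (div_le_one_of_le₀ hAn n.cast_nonneg) (by positivity)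

lemma tc_pow_triangle (hk : 1 ≤ k) (hn : 0 < n) (hA : 0 ≤ criticalLevel k c (log n)) :
    tc k c n ^ (k * (k + 1) / 2 - 1 + 1) = (criticalLevel k c (log n) / n) ^ ((k : ℝ) / 2) := by
  rw [tc_eq, ← rpow_natCast, ← rpow_mul (by positivity)]
  congr 1
  push_cast
  rw [natCast_triangle_sub_one_add_one hk]
  field_simp

lemma natCast_pow_mul_tc_pow_mul_exp (hk : 1 ≤ k) (hn : 1 < n)
    (hA : 0 < criticalLevel k c (log n)) :
    (n : ℝ) ^ (k + 1) * (tc k c n ^ (k * (k + 1) / 2 - 1 + 1) * exp (-criticalLevel k c (log n)))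
      = exp (-c) * (criticalLevel k c (log n) / log n) ^ ((k : ℝ) / 2) := by
  have hn0 : (0 : ℝ) < n := by positivity
  have hL : 0 < log n := log_pos (by exact_mod_cast hn)
  have hnpow : (n : ℝ) ^ (k + 1) = exp ((k + 1) * log n) := by
    rw [← rpow_natCast, rpow_def_of_pos hn0]
    push_cast
    ring_nf
  rw [tc_pow_triangle hk (by omega) hA.le, hnpow, rpow_def_of_pos (div_pos hA hn0),
    rpow_def_of_pos (div_pos hA hL), log_div hA.ne' hn0.ne', log_div hA.ne' hL.ne']
  generalize hA' : criticalLevel k c (log n) = A at *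
  simp only [← exp_add, exp_eq_exp]
  rw [criticalLevel] at hA'
  linear_combination hA'

lemma natCast_pow_mul_integral_le (hk : 1 ≤ k) (hn : 1 < n) (hA : 0 < criticalLevel k c (log n))
    (hAn : criticalLevel k c (log n) ≤ n)
    (hm : (k * (k + 1) / 2 - 1 : ℕ) < (k + 1) * criticalLevel k c (log n)) :
    (n : ℝ) ^ (k + 1) *
        ∫ s in (tc k c n)..1, s ^ (k * (k + 1) / 2 - 1) * exp (-(n : ℝ) * s ^ (k + 1)) ≤
      exp (-c) * (criticalLevel k c (log n) / log n) ^ ((k : ℝ) / 2) /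
        ((k + 1) * criticalLevel k c (log n) - (k * (k + 1) / 2 - 1 : ℕ)) := by
  have hnA := natCast_mul_tc_pow (by omega : 0 < n) hA.le
  rw [← hnA, ← mul_assoc] at hm
  have hint := integral_pow_mul_exp_neg_mul_pow_le (tc_pos (by omega) hA)
    (tc_le_one (by omega) hA.le hAn) hm
  rw [mul_assoc _ (n : ℝ), neg_mul, hnA] at hint
  calc _ ≤ (n : ℝ) ^ (k + 1) * (tc k c n ^ (k * (k + 1) / 2 - 1 + 1) *
          exp (-criticalLevel k c (log n)) /
            ((k + 1) * criticalLevel k c (log n) - (k * (k + 1) / 2 - 1 : ℕ))) :=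
        mul_le_mul_of_nonneg_left hint (by positivity)
    _ = _ := by rw [← mul_div_assoc, natCast_pow_mul_tc_pow_mul_exp hk hn hA]

end CriticalLevel

lemma tendsto_log_div_self : Tendsto (fun x ↦ log x / x) atTop (𝓝 0) := by
  simpa using tendsto_pow_log_div_mul_add_atTop 1 0 1 one_ne_zero

lemma tendsto_criticalLevel_div_self (k : ℕ) (c : ℝ) :
    Tendsto (fun L ↦ criticalLevel k c L / L) atTop (𝓝 ((k : ℝ) / 2 + 1)) := by
  have hlim := (tendsto_const_nhds (x := (k : ℝ) / 2 + 1)).add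
    ((tendsto_log_div_self.const_mul ((k : ℝ) / 2)).add (tendsto_inv_atTop_zero.const_mul c))
  rw [mul_zero, mul_zero, add_zero, add_zero] at hlim
  refine hlim.congr' ?_
  filter_upwards [eventually_ne_atTop 0] with L hL
  rw [criticalLevel]
  field_simp
  ring

lemma tendsto_criticalLevel_atTop (k : ℕ) (c : ℝ) : Tendsto (criticalLevel k c) atTop atTop := by
  refine ((tendsto_criticalLevel_div_self k c).pos_mul_atTop (by positivity) tendsto_id).congr' ?_
  filter_upwards [eventually_ne_atTop 0] with L hL
  exact div_mul_cancel₀ _ hL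

lemma eventually_criticalLevel_log_le (k : ℕ) (c : ℝ) :
    ∀ᶠ x in atTop, criticalLevel k c (log x) ≤ x := by
  have hratio : Tendsto (fun x ↦ criticalLevel k c (log x) / x) atTop (𝓝 0) := by
    have hprod := ((tendsto_criticalLevel_div_self k c).comp tendsto_log_atTop).mul
      tendsto_log_div_self
    rw [mul_zero] at hprod
    refine hprod.congr' ?_
    filter_upwards [eventually_gt_atTop 1] with x hx
    have hL := log_pos hx
    simp only [Function.comp_apply]
    field_simp
  filter_upwards [hratio.eventually (gt_mem_nhds one_pos), eventually_gt_atTop 0] with x hx hx0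
  exact ((div_lt_one hx0).1 hx).le

/-- For `k ≥ 1` and `c ∈ ℝ`,
`n^{k+1} ∫_{t_c(k,n)}^1 s^{k(k+1)/2 − 1} e^{−n s^{k+1}} ds → 0` as `n → ∞`. -/
theorem n_pow_mul_integral_tendsto_zero (k : ℕ) (hk : 1 ≤ k) (c : ℝ) :
    Filter.Tendsto
      (fun n : ℕ =>
        (n : ℝ) ^ (k + 1) *
          ∫ s in (tc k c n)..1,
            s ^ (k * (k + 1) / 2 - 1) * Real.exp (-(n : ℝ) * s ^ (k + 1)))
      Filter.atTop (nhds 0) := by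
  set m := k * (k + 1) / 2 - 1
  set A : ℕ → ℝ := fun n ↦ criticalLevel k c (log n)
  have hlog : Tendsto (fun n : ℕ ↦ log n) atTop atTop :=
    tendsto_log_atTop.comp tendsto_natCast_atTop_atTop
  have hA : Tendsto A atTop atTop := (tendsto_criticalLevel_atTop k c).comp hlog
  have hden : Tendsto (fun n ↦ (k + 1) * A n - m) atTop atTop :=
    tendsto_atTop_add_const_right _ _ (hA.const_mul_atTop (by positivity))
  have hbound : Tendsto (fun n ↦ exp (-c) * (A n / log n) ^ ((k : ℝ) / 2) / ((k + 1) * A n - m))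
      atTop (𝓝 0) :=
    ((((tendsto_criticalLevel_div_self k c).comp hlog).rpow_const
      (Or.inr (by positivity))).const_mul _).div_atTop hden
  refine tendsto_of_tendsto_of_tendsto_of_le_of_le' tendsto_const_nhds hbound ?_ ?_ <;>
    filter_upwards [eventually_gt_atTop 1, hA.eventually_gt_atTop 0, hden.eventually_gt_atTop 0,
      tendsto_natCast_atTop_atTop.eventually (eventually_criticalLevel_log_le k c)]
      with n hn hA0 hden0 hAn
  · have htc := tc_pos (by omega) hA0
    refine mul_nonneg (by positivity) (intervalIntegral.integral_nonneg
      (tc_le_one (by omega) hA0.le hAn) fun s hs ↦ ?_)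
    have := htc.trans_le hs.1
    positivity
  · exact natCast_pow_mul_integral_le hk hn hA0 hAn (by linarith)
end

section
/- Let G be a simple graph on a finite vertex set V with |V| = N, let m ≥ 1 be an integer, and suppose every vertex of G has degree at least m+1. Suppose there exists S₀ ⊆ V with |S₀| ≤ m such that the induced subgraph of G on V ∖ S₀ is disconnected (has at least two connected components). Then there exist disjoint subsets S, T ⊆ V with |S| ≤ m, m − |S| + 2 ≤ |T| ≤ (N − |S|)/2, such that T is the vertex set of a connected component of the induced subgraph of G on V ∖ S. -/
/-!
Take `S = S₀`. Of two distinct components of `G - S₀` the smaller one has at most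
`(N - |S₀|)/2` vertices. Any component contains a vertex `v` together with all of its at least
`m + 1 - |S₀|` neighbours outside `S₀`, so it has at least `m - |S₀| + 2` vertices.
-/

open Set SimpleGraph

namespace SimpleGraph

variable {V : Type*} (G : SimpleGraph V)

theorem exists_connectedComponent_two_mul_ncard_supp_le [Finite V]
    [Nontrivial G.ConnectedComponent] :
    ∃ C : G.ConnectedComponent, 2 * C.supp.ncard ≤ Nat.card V := by
  obtain ⟨C, D, hCD⟩ := exists_pair_ne G.ConnectedComponent
  have hsum : C.supp.ncard + D.supp.ncard ≤ Nat.card V :=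
    ncard_union_eq (G.pairwise_disjoint_supp_connectedComponent hCD) ▸ ncard_le_card _
  rcases le_total C.supp.ncard D.supp.ncard with h | h
  · exact ⟨C, by omega⟩
  · exact ⟨D, by omega⟩

theorem ConnectedComponent.degree_add_one_le_ncard_supp_add_ncard [Fintype V]
    [DecidableRel G.Adj] {s : Set V} {C : (G.induce sᶜ).ConnectedComponent} {v : ↥sᶜ}
    (hv : v ∈ C.supp) :
    G.degree v + 1 ≤ C.supp.ncard + s.ncard := by
  have hsub : insert (v : V) (G.neighborSet v) ⊆ Subtype.val '' C.supp ∪ s := by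
    rintro w (rfl | hw)
    · exact Or.inl ⟨v, hv, rfl⟩
    by_cases hws : w ∈ s
    · exact Or.inr hws
    refine Or.inl ⟨⟨w, hws⟩, ?_, rfl⟩
    rw [mem_supp_iff] at hv ⊢
    exact hv ▸ connectedComponentMk_eq_of_adj (G := G.induce sᶜ) hw.symm
  calc G.degree v + 1 = (insert (v : V) (G.neighborSet v)).ncard := by
        rw [ncard_insert_of_notMem (G.notMem_neighborSet_self), ← Nat.card_coe_set_eq,
          Nat.card_eq_fintype_card, card_neighborSet_eq_degree]
    _ ≤ (Subtype.val '' C.supp ∪ s).ncard := ncard_le_ncard hsub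
    _ ≤ C.supp.ncard + s.ncard := by
        simpa only [ncard_image_of_injective _ Subtype.val_injective] using
          ncard_union_le (Subtype.val '' C.supp) s

end SimpleGraph

theorem exists_small_separated_component_general {V : Type*} [Fintype V] [DecidableEq V]
    (G : SimpleGraph V) [DecidableRel G.Adj] (N m : ℕ)
    (hN : Fintype.card V = N)
    (hdeg : ∀ v : V, m + 1 ≤ G.degree v)
    (S₀ : Finset V) (hS₀ : S₀.card ≤ m)
    (hdisc : 2 ≤ Nat.card (SimpleGraph.ConnectedComponent
      (SimpleGraph.induce ((↑S₀ : Set V)ᶜ) G))) :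
    ∃ S T : Finset V, Disjoint S T ∧ S.card ≤ m ∧
      m - S.card + 2 ≤ T.card ∧ (T.card : ℝ) ≤ ((N : ℝ) - S.card) / 2 ∧
      ∃ C : SimpleGraph.ConnectedComponent (SimpleGraph.induce ((↑S : Set V)ᶜ) G),
        (↑T : Set V) = Subtype.val '' C.supp := by
  have : Nontrivial (G.induce (↑S₀ : Set V)ᶜ).ConnectedComponent :=
    Finite.one_lt_card_iff_nontrivial.mp hdisc
  obtain ⟨C, hsmall⟩ :=
    exists_connectedComponent_two_mul_ncard_supp_le (G.induce (↑S₀ : Set V)ᶜ)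
  obtain ⟨v, hv⟩ := C.nonempty_supp
  have hlarge := ConnectedComponent.degree_add_one_le_ncard_supp_add_ncard G hv
  have hcompl : Nat.card ↥(↑S₀ : Set V)ᶜ = N - S₀.card := by
    rw [Nat.card_coe_set_eq, ncard_compl, ncard_coe_finset, Nat.card_eq_fintype_card, hN]
  have hS₀N : S₀.card ≤ N := hN ▸ S₀.card_le_univ
  have hT : (Subtype.val '' C.supp).toFinset.card = C.supp.ncard := by
    rw [← ncard_eq_toFinset_card', ncard_image_of_injective _ Subtype.val_injective]
  rw [ncard_coe_finset] at hlarge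
  refine ⟨S₀, (Subtype.val '' C.supp).toFinset, ?_, hS₀, ?_, ?_, C, coe_toFinset _⟩
  · rw [Finset.disjoint_right]
    rintro _ hw
    obtain ⟨w, -, rfl⟩ := mem_toFinset.mp hw
    exact w.2
  · have := hdeg v
    omega
  · rw [le_div_iff₀ two_pos, hT, ← Nat.cast_sub hS₀N]
    exact_mod_cast (by omega : C.supp.ncard * 2 ≤ N - S₀.card)

/-- Let `G` be a simple graph on a finite vertex set `V` with `|V| = N`,
`m ≥ 1`, every vertex of degree at least `m+1`. If removing some set `S₀` of at most `m`
vertices disconnects `G` (the induced graph on the complement has at least two connected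
components), then there are disjoint sets `S, T` with `|S| ≤ m`,
`m − |S| + 2 ≤ |T| ≤ (N − |S|)/2`, such that `T` is the vertex set of a connected
component of the induced subgraph on `V ∖ S`. -/
theorem exists_small_separated_component {V : Type*} [Fintype V] [DecidableEq V]
    (G : SimpleGraph V) [DecidableRel G.Adj] (N m : ℕ)
    (hN : Fintype.card V = N) (hm : 1 ≤ m)
    (hdeg : ∀ v : V, m + 1 ≤ G.degree v)
    (S₀ : Finset V) (hS₀ : S₀.card ≤ m)
    (hdisc : 2 ≤ Nat.card (SimpleGraph.ConnectedComponent
      (SimpleGraph.induce ((↑S₀ : Set V)ᶜ) G))) :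
    ∃ S T : Finset V, Disjoint S T ∧ S.card ≤ m ∧
      m - S.card + 2 ≤ T.card ∧ (T.card : ℝ) ≤ ((N : ℝ) - S.card) / 2 ∧
      ∃ C : SimpleGraph.ConnectedComponent (SimpleGraph.induce ((↑S : Set V)ᶜ) G),
        (↑T : Set V) = Subtype.val '' C.supp :=
  exists_small_separated_component_general G N m hN hdeg S₀ hS₀ hdisc
end

section
/- Let k ≥ 1 be an integer and c ∈ ℝ, and for n ≥ 3 let t_c(k,n) := (((k/2+1)·log n + (k/2)·log log n + c)/n)^{1/(k+1)}. For each n and t ∈ [0,1], let B_{n,t} be a binomial random variable with parameters n−k and t^k. Then Σ_{n} ∫_{t_c(k,n)}^{1} n^k · t^{k(k−1)/2} · P( |B_{n,t} − (n−k)t^k| ≥ ((n−k)t^k)^{3/5} ) dt < ∞, where the sum is over all integers n large enough that t_c(k,n) ∈ (0,1). -/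
/-- `P(|B_{n,t} − (n−k)t^k| ≥ ((n−k)t^k)^{3/5})` for a binomial random variable `B_{n,t}`
with parameters `n−k` and `t^k`, written out as an explicit sum. -/
noncomputable def binomTail (k n : ℕ) (t : ℝ) : ℝ :=
  ∑ j ∈ Finset.range (n - k + 1),
    if (((n - k : ℕ) : ℝ) * t ^ k) ^ ((3 : ℝ) / 5) ≤
        |(j : ℝ) - ((n - k : ℕ) : ℝ) * t ^ k| then
      ((n - k).choose j : ℝ) * (t ^ k) ^ j * (1 - t ^ k) ^ (n - k - j)
    else 0

/-!
For `t ≥ t_c(k,n) ≥ n^{-1/(k+1)}` the mean `μ = (n-k) t^k` of `B_{n,t}` is at least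
`n^{1/(k+1)} / 2`. A Chernoff bound, i.e. Markov's inequality for `exp (l |B - μ|)` with
`l = μ^{-2/5} / 2`, gives `P(|B - μ| ≥ μ^{3/5}) ≤ 2 exp (-μ^{1/5} / 4)`. So the `n`-th integral is
at most `2 n^k exp (-n^{1/(5(k+1))} / 8)`, and a stretched exponential beats every power of `n`.
-/

open Real Finset Filter Topology Asymptotics

noncomputable def binomialDeviationProb (m : ℕ) (p a : ℝ) : ℝ :=
  ∑ j ∈ range (m + 1),
    if a ≤ |(j : ℝ) - m * p| then (m.choose j : ℝ) * p ^ j * (1 - p) ^ (m - j) else 0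

lemma binomialDeviationProb_nonneg (m : ℕ) {p : ℝ} (a : ℝ) (hp0 : 0 ≤ p) (hp1 : p ≤ 1) :
    0 ≤ binomialDeviationProb m p a := by
  have : 0 ≤ 1 - p := by linarith
  refine sum_nonneg fun j _ => ?_
  split_ifs <;> positivity

lemma binomial_mgf (m : ℕ) (p x : ℝ) :
    ∑ j ∈ range (m + 1), (m.choose j : ℝ) * p ^ j * (1 - p) ^ (m - j) * exp (x * j) =
      (p * exp x + (1 - p)) ^ m := by
  rw [add_pow]
  refine sum_congr rfl fun j _ => ?_
  rw [mul_pow, ← exp_nat_mul, mul_comm (j : ℝ) x]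
  ring

lemma binomial_centered_mgf_le {m : ℕ} {p x : ℝ} (hp0 : 0 ≤ p) (hp1 : p ≤ 1) (hx : |x| ≤ 1) :
    ∑ j ∈ range (m + 1), (m.choose j : ℝ) * p ^ j * (1 - p) ^ (m - j) * exp (x * (j - m * p)) ≤
      exp (m * p * x ^ 2) := by
  have hsum : ∑ j ∈ range (m + 1),
      (m.choose j : ℝ) * p ^ j * (1 - p) ^ (m - j) * exp (x * (j - m * p)) =
        (p * exp x + (1 - p)) ^ m * exp (-(m * p * x)) := by
    rw [← binomial_mgf, sum_mul]
    refine sum_congr rfl fun j _ => ?_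
    rw [mul_assoc _ (exp _), ← exp_add]
    ring_nf
  have hbase : p * exp x + (1 - p) ≤ exp (p * (x + x ^ 2)) := by
    have hquad : exp x - 1 - x ≤ x ^ 2 := (le_abs_self _).trans (abs_exp_sub_one_sub_id_le hx)
    calc p * exp x + (1 - p) = p * (exp x - 1) + 1 := by ring
      _ ≤ exp (p * (exp x - 1)) := add_one_le_exp _
      _ ≤ exp (p * (x + x ^ 2)) := by gcongr; linarith
  rw [hsum]
  calc (p * exp x + (1 - p)) ^ m * exp (-(m * p * x))
      ≤ exp (p * (x + x ^ 2)) ^ m * exp (-(m * p * x)) := by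
        gcongr
    _ = exp (m * p * x ^ 2) := by rw [← exp_nat_mul, ← exp_add]; ring_nf

lemma binomialDeviationProb_le {m : ℕ} {p a l : ℝ} (hp0 : 0 ≤ p) (hp1 : p ≤ 1) (hl0 : 0 ≤ l)
    (hl1 : l ≤ 1) : binomialDeviationProb m p a ≤ 2 * exp (m * p * l ^ 2 - l * a) := by
  set w : ℕ → ℝ := fun j => (m.choose j : ℝ) * p ^ j * (1 - p) ^ (m - j)
  -- Exponential Markov: on the event `a ≤ |j - m p|` we have `exp (l * a) ≤ exp (l * |j - m p|)`.
  have hterm : ∀ j : ℕ, (if a ≤ |(j : ℝ) - m * p| then w j else 0) ≤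
      (w j * exp (l * (j - m * p)) + w j * exp (-l * (j - m * p))) * exp (-(l * a)) := by
    intro j
    split_ifs with hdev
    · have hexp : exp (l * a) ≤ exp (l * (j - m * p)) + exp (-l * (j - m * p)) := by
        rcases le_abs.1 hdev with h | h
        · have : exp (l * a) ≤ exp (l * (j - m * p)) := by gcongr
          linarith [exp_pos (-l * (j - m * p))]
        · have : exp (l * a) ≤ exp (-l * (j - m * p)) := by
            rw [neg_mul, ← mul_neg]; gcongr
          linarith [exp_pos (l * (j - m * p))]
      calc w j = w j * exp (l * a) * exp (-(l * a)) := by rw [mul_assoc, ← exp_add]; simp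
        _ ≤ _ := by rw [← mul_add]; gcongr
    · positivity
  calc binomialDeviationProb m p a
      ≤ ∑ j ∈ range (m + 1),
          (w j * exp (l * (j - m * p)) + w j * exp (-l * (j - m * p))) * exp (-(l * a)) :=
        sum_le_sum fun j _ => hterm j
    _ ≤ (exp (m * p * l ^ 2) + exp (m * p * (-l) ^ 2)) * exp (-(l * a)) := by
        rw [← sum_mul, sum_add_distrib]
        gcongr
        · exact binomial_centered_mgf_le hp0 hp1 (by rwa [abs_of_nonneg hl0])
        · exact binomial_centered_mgf_le hp0 hp1 (by rwa [abs_neg, abs_of_nonneg hl0])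
    _ = 2 * exp (m * p * l ^ 2 - l * a) := by rw [neg_sq, sub_eq_add_neg, exp_add]; ring

lemma binomialDeviationProb_rpow_le {m : ℕ} {p : ℝ} (hp0 : 0 ≤ p) (hp1 : p ≤ 1)
    (hμ : 1 ≤ m * p) :
    binomialDeviationProb m p ((m * p) ^ (3 / 5 : ℝ)) ≤ 2 * exp (-(m * p) ^ (1 / 5 : ℝ) / 4) := by
  set r := (m * p : ℝ) ^ (1 / 5 : ℝ)
  have hr : 1 ≤ r := one_le_rpow hμ (by norm_num)
  have hpow : ∀ n : ℕ, (m * p : ℝ) ^ (n / 5 : ℝ) = r ^ n := fun n => by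
    rw [← rpow_natCast, ← rpow_mul (by linarith)]; ring_nf
  -- As `m p = r ^ 5`, `l = 1 / (2 r ^ 2)` gives `m p l ^ 2 - l (m p) ^ (3 / 5) = -r / 4`.
  have hl1 : 1 / (2 * r ^ 2) ≤ 1 := by
    rw [div_le_one (by positivity)]; nlinarith
  refine (binomialDeviationProb_le hp0 hp1 (by positivity) hl1).trans_eq ?_
  have h5 := hpow 5
  have h3 := hpow 3
  norm_num at h5 h3
  rw [h3, h5]
  congr 2
  field_simp
  ring

lemma tendsto_rpow_mul_exp_neg_mul_rpow (s : ℝ) {b ε : ℝ} (hb : 0 < b) (hε : 0 < ε) :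
    Tendsto (fun x : ℝ => x ^ s * exp (-b * x ^ ε)) atTop (𝓝 0) := by
  refine ((tendsto_rpow_mul_exp_neg_mul_atTop_nhds_zero (s / ε) b hb).comp
    (tendsto_rpow_atTop hε)).congr' ?_
  filter_upwards [eventually_ge_atTop 0] with x hx
  rw [Function.comp_apply, ← rpow_mul hx, mul_div_cancel₀ _ hε.ne']

lemma summable_rpow_mul_exp_neg_mul_rpow (s : ℝ) {b ε : ℝ} (hb : 0 < b) (hε : 0 < ε) :
    Summable fun n : ℕ => (n : ℝ) ^ s * exp (-b * (n : ℝ) ^ ε) := by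
  have hbounded : (fun n : ℕ => (n : ℝ) ^ (s + 2) * exp (-b * (n : ℝ) ^ ε)) =O[atTop]
      fun _ => (1 : ℝ) :=
    ((tendsto_rpow_mul_exp_neg_mul_rpow (s + 2) hb hε).comp
      tendsto_natCast_atTop_atTop).isBigO_one ℝ
  refine summable_of_isBigO_nat (summable_nat_rpow.2 (by norm_num : (-2 : ℝ) < -1)) ?_
  refine ((isBigO_refl (fun n : ℕ => (n : ℝ) ^ (-2 : ℝ)) atTop).mul hbounded).congr' ?_ (by simp)
  filter_upwards [eventually_gt_atTop 0] with n hn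
  rw [← mul_assoc, ← rpow_add (by positivity)]
  ring_nf

lemma eventually_rpow_neg_le_tc (k : ℕ) (c : ℝ) :
    ∀ᶠ n : ℕ in atTop, (n : ℝ) ^ (-(1 / (k + 1) : ℝ)) ≤ tc k c n := by
  filter_upwards [(tendsto_log_atTop.comp tendsto_natCast_atTop_atTop).eventually_ge_atTop
    (max 1 (1 - c))] with n hlog
  rw [Function.comp_apply, max_le_iff] at hlog
  have hn : (0 : ℝ) < n := by
    rcases (Nat.cast_nonneg (α := ℝ) n).lt_or_eq with h | h
    · exact h
    · rw [← h, log_zero] at hlog; linarith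
  have hloglog : 0 ≤ log (log n) := log_nonneg hlog.1
  have hnum : 1 ≤ ((k : ℝ) / 2 + 1) * log n + ((k : ℝ) / 2) * log (log n) + c := by
    have : (0 : ℝ) ≤ k / 2 := by positivity
    nlinarith
  rw [rpow_neg hn.le, ← inv_rpow hn.le, inv_eq_one_div, tc]
  gcongr

lemma rpow_div_two_le_mul_pow {k n : ℕ} {t : ℝ} (hn : 0 < n) (hkn : 2 * k ≤ n)
    (ht : (n : ℝ) ^ (-(1 / (k + 1) : ℝ)) ≤ t) :
    (n : ℝ) ^ (1 / (k + 1) : ℝ) / 2 ≤ ((n - k : ℕ) : ℝ) * t ^ k := by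
  have hn0 : (0 : ℝ) < n := by exact_mod_cast hn
  have hsub : (n : ℝ) / 2 ≤ ((n - k : ℕ) : ℝ) := by
    have : (2 * k : ℝ) ≤ n := by exact_mod_cast hkn
    rw [Nat.cast_sub (by omega)]; linarith
  have hpow : (n : ℝ) ^ (-(k / (k + 1) : ℝ)) ≤ t ^ k :=
    calc (n : ℝ) ^ (-(k / (k + 1) : ℝ)) = ((n : ℝ) ^ (-(1 / (k + 1) : ℝ))) ^ k := by
          rw [← rpow_natCast, ← rpow_mul hn0.le]; ring_nf
      _ ≤ t ^ k := by gcongr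
  calc (n : ℝ) ^ (1 / (k + 1) : ℝ) / 2 = n / 2 * (n : ℝ) ^ (-(k / (k + 1) : ℝ)) := by
        have hexp : (1 / (k + 1) : ℝ) = 1 + -(k / (k + 1)) := by field_simp; ring
        rw [hexp, rpow_add hn0, rpow_one, div_mul_eq_mul_div]
    _ ≤ ((n - k : ℕ) : ℝ) * t ^ k := by gcongr

lemma binomTail_eq (k n : ℕ) (t : ℝ) :
    binomTail k n t =
      binomialDeviationProb (n - k) (t ^ k) ((((n - k : ℕ) : ℝ) * t ^ k) ^ (3 / 5 : ℝ)) :=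
  rfl

lemma binomTail_nonneg (k n : ℕ) {t : ℝ} (ht0 : 0 ≤ t) (ht1 : t ≤ 1) : 0 ≤ binomTail k n t :=
  binomialDeviationProb_nonneg _ _ (by positivity) (pow_le_one₀ ht0 ht1)

lemma binomTail_le {k n : ℕ} {t : ℝ} (hn : 0 < n) (hkn : 2 * k ≤ n)
    (h2 : 2 ≤ (n : ℝ) ^ (1 / (k + 1) : ℝ)) (ht : (n : ℝ) ^ (-(1 / (k + 1) : ℝ)) ≤ t)
    (ht1 : t ≤ 1) :
    binomTail k n t ≤ 2 * exp (-(1 / 8) * (n : ℝ) ^ (1 / (k + 1) / 5 : ℝ)) := by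
  have ht0 : 0 ≤ t := (by positivity : (0 : ℝ) ≤ _).trans ht
  set μ := ((n - k : ℕ) : ℝ) * t ^ k
  have hμ : (n : ℝ) ^ (1 / (k + 1) : ℝ) / 2 ≤ μ := rpow_div_two_le_mul_pow hn hkn ht
  have hroot : (n : ℝ) ^ (1 / (k + 1) / 5 : ℝ) / 2 ≤ μ ^ (1 / 5 : ℝ) :=
    calc (n : ℝ) ^ (1 / (k + 1) / 5 : ℝ) / 2
        ≤ (n : ℝ) ^ (1 / (k + 1) / 5 : ℝ) / 2 ^ (1 / 5 : ℝ) := by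
          gcongr
          exact rpow_le_self_of_one_le (by norm_num) (by norm_num)
      _ = ((n : ℝ) ^ (1 / (k + 1) : ℝ) / 2) ^ (1 / 5 : ℝ) := by
          rw [div_rpow (by positivity) (by norm_num), ← rpow_mul (by positivity)]; ring_nf
      _ ≤ μ ^ (1 / 5 : ℝ) := by gcongr
  rw [binomTail_eq]
  refine (binomialDeviationProb_rpow_le (by positivity) (pow_le_one₀ ht0 ht1)
    (by linarith)).trans ?_
  gcongr
  linarith

lemma norm_integral_pow_mul_pow_mul_binomTail_le {k n : ℕ} (e : ℕ) {s : ℝ} (hn : 0 < n)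
    (hkn : 2 * k ≤ n) (h2 : 2 ≤ (n : ℝ) ^ (1 / (k + 1) : ℝ))
    (hs : (n : ℝ) ^ (-(1 / (k + 1) : ℝ)) ≤ s) (hs1 : s ≤ 1) :
    ‖∫ t in s..1, (n : ℝ) ^ k * t ^ e * binomTail k n t‖ ≤
      (n : ℝ) ^ k * (2 * exp (-(1 / 8) * (n : ℝ) ^ (1 / (k + 1) / 5 : ℝ))) := by
  have hs0 : 0 ≤ s := (by positivity : (0 : ℝ) ≤ _).trans hs
  set C := (n : ℝ) ^ k * (2 * exp (-(1 / 8) * (n : ℝ) ^ (1 / (k + 1) / 5 : ℝ)))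
  have hC : 0 ≤ C := by positivity
  calc ‖∫ t in s..1, (n : ℝ) ^ k * t ^ e * binomTail k n t‖ ≤ C * |1 - s| :=
        intervalIntegral.norm_integral_le_of_norm_le_const fun t ht => ?_
    _ ≤ C := by rw [abs_of_nonneg (by linarith)]; nlinarith
  rw [Set.uIoc_of_le hs1] at ht
  have ht0 : 0 ≤ t := hs0.trans ht.1.le
  have htail0 := binomTail_nonneg k n ht0 ht.2
  rw [norm_of_nonneg (by positivity)]
  calc (n : ℝ) ^ k * t ^ e * binomTail k n t ≤ (n : ℝ) ^ k * 1 * binomTail k n t := by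
        gcongr
        exact pow_le_one₀ ht0 ht.2
    _ ≤ C := by
        rw [mul_one]
        exact mul_le_mul_of_nonneg_left (binomTail_le hn hkn h2 (hs.trans ht.1.le) ht.2)
          (by positivity)

theorem summable_binomial_tail_integral_general (k : ℕ) (c : ℝ) :
    Summable (fun n : ℕ =>
      if tc k c n ∈ Set.Ioo (0 : ℝ) 1 then
        ∫ t in (tc k c n)..1, (n : ℝ) ^ k * t ^ (k * (k - 1) / 2) * binomTail k n t
      else 0) := by
  have hβ : (0 : ℝ) < 1 / (k + 1) := by positivity
  have hsum : Summable fun n : ℕ =>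
      (n : ℝ) ^ k * (2 * exp (-(1 / 8) * (n : ℝ) ^ (1 / (k + 1) / 5 : ℝ))) := by
    simpa only [rpow_natCast, mul_left_comm _ (2 : ℝ)] using
      (summable_rpow_mul_exp_neg_mul_rpow k (by norm_num : (0 : ℝ) < 1 / 8)
        (by positivity : (0 : ℝ) < 1 / (k + 1) / 5)).mul_left 2
  refine hsum.of_norm_bounded_eventually_nat ?_
  filter_upwards [eventually_rpow_neg_le_tc k c, eventually_gt_atTop 0,
    eventually_ge_atTop (2 * k), ((tendsto_rpow_atTop hβ).comp
      tendsto_natCast_atTop_atTop).eventually_ge_atTop 2] with n htc hn hkn h2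
  split_ifs with hmem
  · exact norm_integral_pow_mul_pow_mul_binomTail_le _ hn hkn h2 htc hmem.2.le
  · rw [norm_zero]; positivity

/-- `Σ_n ∫_{t_c(k,n)}^1 n^k t^{k(k−1)/2}
P(|B_{n,t} − (n−k)t^k| ≥ ((n−k)t^k)^{3/5}) dt < ∞`, the sum being over those `n` with
`t_c(k,n) ∈ (0,1)`. -/
theorem summable_binomial_tail_integral (k : ℕ) (hk : 1 ≤ k) (c : ℝ) :
    Summable (fun n : ℕ =>
      if tc k c n ∈ Set.Ioo (0 : ℝ) 1 then
        ∫ t in (tc k c n)..1, (n : ℝ) ^ k * t ^ (k * (k - 1) / 2) * binomTail k n t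
      else 0) :=
  summable_binomial_tail_integral_general k c
end
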